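/- Fix k ≥ 1 and 0 ≤ i ≤ k. Define the weighted shift map E_i: A → A on A = ℂ[x₁, x₂, …] by E_i(a) = (1/i!)·τ(a)·x₁^{i}, where τ is the index-shift map. Then E_i maps the ideal I_{k,i} = Σ_{t≥k+1} A·R⁰_{k,t} + A·x₁^{k-i+1} into the ideal I_{k,k-i} = Σ_{t≥k+1} A·R⁰_{k,t} + A·x₁^{i+1}. -/

import Mathlib

open MvPolynomial

noncomputable section

abbrev A : Type := MvPolynomial ℕ+ ℂ

/-- weight function: `x_m` has weight `m`. -/
def wtA : ℕ+ → ℕ := fun m => (m : ℕ)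

/-- the index-shift map `τ : x_m ↦ x_{m+1}` (multiplicative on monomials). -/
def tau : A →ₐ[ℂ] A := rename (fun m => m + 1)

/-- `B = ℂ[x₂, x₃, …]`, the subalgebra generated by the variables `x_m`, `m ≥ 2`. -/
def BB : Subalgebra ℂ A := Algebra.adjoin ℂ {p : A | ∃ m : ℕ+, 2 ≤ m ∧ p = X m}

/-- `R⁰_{k,t}`: sum over ordered `(k+1)`-tuples of integers `≥ 1` summing to `t`. -/
def R0 (k t : ℕ) : A :=
  ∑ m ∈ (Finset.Nat.antidiagonalTuple (k+1) t).filter (fun m => ∀ i, 1 ≤ m i),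
    ∏ i, X ((m i).toPNat')

/-- `R¹_{k,t}`: sum over ordered `(k+1)`-tuples of integers `≥ 2` summing to `t`. -/
def R1 (k t : ℕ) : A :=
  ∑ m ∈ (Finset.Nat.antidiagonalTuple (k+1) t).filter (fun m => ∀ i, 2 ≤ m i),
    ∏ i, X ((m i).toPNat')

/-- the projection `ρ : A → B` along `A·x₁` (set `x₁ = 0`). -/
def rho : A →ₐ[ℂ] A := aeval (fun m : ℕ+ => if m = 1 then 0 else X m)

/-- `I_{k,0} = Σ_{t ≥ k+1} A·R⁰_{k,t}`. -/
def Ik0 (k : ℕ) : Ideal A := Ideal.span {p : A | ∃ t, k + 1 ≤ t ∧ p = R0 k t}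

/-- `I_{k,i} = Σ_{t ≥ k+1} A·R⁰_{k,t} + A·x₁^{k-i+1}`. -/
def Ik (k i : ℕ) : Ideal A := Ik0 k ⊔ Ideal.span {X 1 ^ (k - i + 1)}

/-- `I'_{k,k} = Σ_{t ≥ 2(k+1)} B·R¹_{k,t}` as a ℂ-subspace of `A`. -/
def Ipkk (k : ℕ) : Submodule ℂ A :=
  Submodule.span ℂ {p : A | ∃ t, 2*(k+1) ≤ t ∧ ∃ b ∈ BB, p = b * R1 k t}

end

/-! The map `a ↦ τ(a) x₁^i` is `τ`-semilinear, so it sends the ideal generated by a set into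
`J = I_{k,k-i}` as soon as it sends the generators there, i.e. `I_{k,i}` lies in the preimage under
`τ` of the colon ideal `J : x₁^i`.

* `τ(R⁰_{k,t}) = R¹_{k,t+k+1}`, and `R⁰_{k,s} - R¹_{k,s}` is divisible by `x₁` (the tuples it
  runs over contain a `1`), so `τ(R⁰_{k,t}) x₁^i ≡ R⁰_{k,t+k+1} x₁^i` modulo `x₁^{i+1}`.
* `τ(x₁^{k-i+1}) x₁^i = x₁^i x₂^{k+1-i}`. A monomial of `R⁰_{k,2(k+1)-i}` with `c` factors `x₁`
  has weight at least `c + 2(k+1-c)`, so `c ≥ i`, and `c = i` forces all other factors to be `x₂`.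
  Hence `R⁰_{k,2(k+1)-i} ≡ N x₁^i x₂^{k+1-i}` modulo `x₁^{i+1}` with `N > 0`, and `N` is invertible
  in `ℂ`. -/

open Finset

section Tuples

variable {ι : Type*} [Fintype ι] {m : ι → ℕ}

lemma sum_add_card_filter_eq_one (m : ι → ℕ) :
    ∑ j, m j + #{j | m j = 1} = ∑ j, (m j + if m j = 1 then 1 else 0) := by
  rw [card_filter, sum_add_distrib]

lemma two_mul_card_le_sum_add_card_eq_one (hm : ∀ j, 1 ≤ m j) :
    2 * Fintype.card ι ≤ ∑ j, m j + #{j | m j = 1} := by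
  rw [sum_add_card_filter_eq_one, ← card_univ, mul_comm, ← smul_eq_mul, ← sum_const]
  exact sum_le_sum fun j _ => by have := hm j; split_ifs <;> omega

lemma sum_add_card_eq_one_eq_two_mul_card_iff (hm : ∀ j, 1 ≤ m j) :
    ∑ j, m j + #{j | m j = 1} = 2 * Fintype.card ι ↔ ∀ j, m j ≤ 2 := by
  rw [sum_add_card_filter_eq_one, ← card_univ, mul_comm, ← smul_eq_mul, ← sum_const, eq_comm,
    sum_eq_sum_iff_of_le fun j _ => by have := hm j; split_ifs <;> omega]
  exact forall_congr' fun j => by have := hm j; split_ifs <;> simp <;> omega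

end Tuples

section Monomials

variable {R ι : Type*} [CommSemiring R] [Fintype ι] {m : ι → ℕ}

lemma X_one_pow_card_dvd_prod (m : ι → ℕ) :
    (X 1 : MvPolynomial ℕ+ R) ^ #{j | m j = 1} ∣ ∏ j, X (m j).toPNat' := by
  have h : ∏ j ∈ {j | m j = 1}, (X (m j).toPNat' : MvPolynomial ℕ+ R) = X 1 ^ #{j | m j = 1} :=
    prod_eq_pow_card fun j hj => by rw [(mem_filter.1 hj).2]; rfl
  exact h ▸ prod_dvd_prod_of_subset _ _ _ (subset_univ _)

lemma prod_X_toPNat'_of_le_two (hm₁ : ∀ j, 1 ≤ m j) (hm₂ : ∀ j, m j ≤ 2) :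
    ∏ j, (X (m j).toPNat' : MvPolynomial ℕ+ R) = X 1 ^ #{j | m j = 1} * X 2 ^ #{j | m j ≠ 1} := by
  have h : ∀ j, (X (m j).toPNat' : MvPolynomial ℕ+ R) = if m j = 1 then X 1 else X 2 := by
    intro j
    obtain h | h : m j = 1 ∨ m j = 2 := by have := hm₁ j; have := hm₂ j; omega
    all_goals simp only [h]; rfl
  rw [prod_congr rfl fun j _ => h j, prod_ite, prod_const, prod_const]

variable {i : ℕ}

lemma prod_X_toPNat'_of_card_eq_one_eq (hm : ∀ j, 1 ≤ m j)
    (hsum : ∑ j, m j + i = 2 * Fintype.card ι) (hc : #{j | m j = 1} = i) :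
    ∏ j, (X (m j).toPNat' : MvPolynomial ℕ+ R) = X 1 ^ i * X 2 ^ (Fintype.card ι - i) := by
  have hcompl := card_filter_add_card_filter_not (s := univ) (fun j => m j = 1)
  rw [card_univ, hc] at hcompl
  rw [prod_X_toPNat'_of_le_two hm ((sum_add_card_eq_one_eq_two_mul_card_iff hm).1 (hc ▸ hsum)),
    hc, show #{j | m j ≠ 1} = Fintype.card ι - i by simp only [ne_eq]; omega]

lemma X_one_pow_succ_dvd_prod_of_card_eq_one_ne (hm : ∀ j, 1 ≤ m j)
    (hsum : ∑ j, m j + i = 2 * Fintype.card ι) (hc : #{j | m j = 1} ≠ i) :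
    (X 1 : MvPolynomial ℕ+ R) ^ (i + 1) ∣ ∏ j, X (m j).toPNat' := by
  have := two_mul_card_le_sum_add_card_eq_one hm
  exact (pow_dvd_pow _ (by omega)).trans (X_one_pow_card_dvd_prod m)

end Monomials

lemma tau_X (n : ℕ+) : tau (X n) = X (n + 1) := rename_X _ _

lemma tau_R0 (k t : ℕ) : tau (R0 k t) = R1 k (t + (k + 1)) := by
  unfold R0 R1
  rw [map_sum]
  refine sum_nbij' (· + 1) (· - 1) ?_ ?_ ?_ ?_ ?_
  · intro m hm
    simp only [mem_filter, Nat.mem_antidiagonalTuple, Pi.add_apply, Pi.one_apply] at hm ⊢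
    refine ⟨?_, fun j => by have := hm.2 j; omega⟩
    simp [sum_add_distrib, hm.1]
  · intro m hm
    simp only [mem_filter, Nat.mem_antidiagonalTuple, Pi.sub_apply, Pi.one_apply] at hm ⊢
    refine ⟨?_, fun j => by have := hm.2 j; omega⟩
    have : ∑ j, (m j - 1) + ∑ j : Fin (k + 1), 1 = ∑ j, m j := by
      rw [← sum_add_distrib]
      exact sum_congr rfl fun j _ => by have := hm.2 j; omega
    simp only [sum_const, card_univ, Fintype.card_fin, smul_eq_mul, mul_one] at this
    omega
  · intro m _
    funext j
    simp
  · intro m hm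
    simp only [mem_filter] at hm
    funext j
    have := hm.2 j
    simp only [Pi.add_apply, Pi.sub_apply, Pi.one_apply]
    omega
  · intro m hm
    simp only [mem_filter] at hm
    rw [map_prod]
    refine prod_congr rfl fun j _ => ?_
    have := hm.2 j
    rw [tau_X]
    congr 1
    apply PNat.coe_injective
    simp [show 0 < m j by omega]

lemma X_one_dvd_R0_sub_R1 (k t : ℕ) : (X 1 : A) ∣ R0 k t - R1 k t := by
  unfold R0 R1
  have hsub : {m ∈ Nat.antidiagonalTuple (k + 1) t | ∀ j, 2 ≤ m j} ⊆
      {m ∈ Nat.antidiagonalTuple (k + 1) t | ∀ j, 1 ≤ m j} :=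
    monotone_filter_right _ fun m _ h j => (h j).trans' (by omega)
  rw [← sum_sdiff hsub, add_sub_cancel_right]
  refine dvd_sum fun m hm => ?_
  simp only [mem_sdiff, mem_filter, not_and, not_forall] at hm
  obtain ⟨⟨hmem, hm₁⟩, hm₂⟩ := hm
  obtain ⟨j, hj⟩ := hm₂ hmem
  have : m j = 1 := by have := hm₁ j; omega
  have hX : (X (m j).toPNat' : A) = X 1 := by rw [this]; rfl
  rw [← hX]
  exact dvd_prod_of_mem _ (mem_univ j)

section Ideals

variable {k i : ℕ}

lemma Ik_sub_eq_sup (hi : i ≤ k) : Ik k (k - i) = Ik0 k ⊔ Ideal.span {X 1 ^ (i + 1)} := by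
  rw [Ik, Nat.sub_sub_self hi]

lemma R0_mem_Ik0 {t : ℕ} (ht : k + 1 ≤ t) : R0 k t ∈ Ik0 k := Ideal.subset_span ⟨t, ht, rfl⟩

lemma exists_fin_tuple_card_eq_one_eq {n i : ℕ} (hi : i ≤ n) :
    ∃ m : Fin n → ℕ, (∀ j, 1 ≤ m j) ∧ ∑ j, m j + i = 2 * n ∧ #{j | m j = 1} = i := by
  set m : Fin n → ℕ := fun j => if (j : ℕ) < i then 1 else 2
  have hm : ∀ j, 1 ≤ m j := fun j => by simp only [m]; split_ifs <;> omega
  have hc : #{j | m j = 1} = i := by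
    simp only [m, ite_eq_left_iff, OfNat.ofNat_ne_one, imp_false, not_not]
    rw [Fin.card_filter_val_lt]
    omega
  have hsum := (sum_add_card_eq_one_eq_two_mul_card_iff hm).2
    fun j => by simp only [m]; split_ifs <;> omega
  rw [hc, Fintype.card_fin] at hsum
  exact ⟨m, hm, hsum, hc⟩

lemma exists_R0_sub_nsmul_mem_span (hi : i ≤ k + 1) :
    ∃ N, 0 < N ∧ R0 k (2 * (k + 1) - i) - N • (X 1 ^ i * X 2 ^ (k + 1 - i)) ∈
      Ideal.span {X 1 ^ (i + 1)} := by
  classical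
  set F := {m ∈ Nat.antidiagonalTuple (k + 1) (2 * (k + 1) - i) | ∀ j, 1 ≤ m j}
  have hF : ∀ m ∈ F, (∀ j, 1 ≤ m j) ∧ ∑ j, m j + i = 2 * Fintype.card (Fin (k + 1)) := by
    intro m hm
    simp only [F, mem_filter, Nat.mem_antidiagonalTuple] at hm
    simp only [Fintype.card_fin]
    exact ⟨hm.2, by omega⟩
  set G := {m ∈ F | #{j | m j = 1} = i}
  have hG : G.Nonempty := by
    obtain ⟨m, hm, hsum, hc⟩ := exists_fin_tuple_card_eq_one_eq hi
    refine ⟨m, ?_⟩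
    simp only [G, F, mem_filter, Nat.mem_antidiagonalTuple]
    exact ⟨⟨by omega, hm⟩, hc⟩
  have hsplit := sum_filter_add_sum_filter_not F (fun m => #{j | m j = 1} = i)
    fun m => ∏ j, (X (m j).toPNat' : A)
  rw [sum_congr rfl fun m hm => prod_X_toPNat'_of_card_eq_one_eq (hF m (mem_filter.1 hm).1).1
    (hF m (mem_filter.1 hm).1).2 (mem_filter.1 hm).2, sum_const, Fintype.card_fin] at hsplit
  refine ⟨#G, hG.card_pos, ?_⟩
  rw [show R0 k _ = ∑ m ∈ F, ∏ j, X (m j).toPNat' from rfl, ← hsplit, add_sub_cancel_left]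
  refine Ideal.sum_mem _ fun m hm => Ideal.mem_span_singleton.2 ?_
  obtain ⟨hmF, hc⟩ := mem_filter.1 hm
  exact X_one_pow_succ_dvd_prod_of_card_eq_one_ne (hF m hmF).1 (hF m hmF).2 hc

lemma X_one_pow_mul_X_two_pow_mem (hi : i ≤ k + 1) :
    (X 1 ^ i * X 2 ^ (k + 1 - i) : A) ∈ Ik0 k ⊔ Ideal.span {X 1 ^ (i + 1)} := by
  obtain ⟨N, hN, hmem⟩ := exists_R0_sub_nsmul_mem_span hi
  have hmul : (N : ℂ) • (X 1 ^ i * X 2 ^ (k + 1 - i) : A) ∈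
      Ik0 k ⊔ Ideal.span {X 1 ^ (i + 1)} := by
    rw [Nat.cast_smul_eq_nsmul, ← sub_sub_cancel (R0 k _) (N • _)]
    exact sub_mem (Ideal.mem_sup_left (R0_mem_Ik0 (by omega))) (Ideal.mem_sup_right hmem)
  simpa [smul_smul, hN.ne'] using Submodule.smul_of_tower_mem _ (N : ℂ)⁻¹ hmul

lemma Ik_le_comap_tau_colon (hi : i ≤ k) :
    Ik k i ≤ ((Ik k (k - i)).colon {X 1 ^ i}).comap tau := by
  rw [Ik_sub_eq_sup hi, Ik, Ik0, sup_le_iff, Ideal.span_le, Ideal.span_le]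
  constructor
  · rintro _ ⟨t, ht, rfl⟩
    simp only [SetLike.mem_coe, Ideal.mem_comap, Submodule.mem_colon_singleton, smul_eq_mul,
      tau_R0]
    rw [← sub_sub_cancel (R0 k (t + (k + 1))) (R1 k (t + (k + 1))), sub_mul]
    refine sub_mem (Ideal.mul_mem_right _ _ (Ideal.mem_sup_left (R0_mem_Ik0 (by omega))))
      (Ideal.mem_sup_right (Ideal.mem_span_singleton.2 ?_))
    rw [pow_succ']
    exact mul_dvd_mul (X_one_dvd_R0_sub_R1 k _) dvd_rfl
  · rintro _ rfl
    simp only [SetLike.mem_coe, Ideal.mem_comap, Submodule.mem_colon_singleton, smul_eq_mul,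
      map_pow, tau_X]
    rw [mul_comm, show k - i + 1 = k + 1 - i by omega]
    exact X_one_pow_mul_X_two_pow_mem (by omega)

end Ideals

theorem stmt12_general (k i : ℕ) (hi : i ≤ k) :
    ∀ a ∈ Ik k i, ((i.factorial : ℂ)⁻¹) • (tau a * X 1 ^ i) ∈ Ik k (k - i) := fun _ ha =>
  Submodule.smul_of_tower_mem _ _ (Submodule.mem_colon_singleton.1 (Ik_le_comap_tau_colon hi ha))

/-- the weighted shift `E_i(a) = (1/i!)·τ(a)·x₁^i` maps `I_{k,i}`
into `I_{k,k-i}`. -/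
theorem stmt12 (k i : ℕ) (hk : 1 ≤ k) (hi : i ≤ k) :
    ∀ a ∈ Ik k i, ((i.factorial : ℂ)⁻¹) • (tau a * X 1 ^ i) ∈ Ik k (k - i) :=
  stmt12_general k i hi
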